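/- arXiv:math/0409277 — 2 statements merged into one kernel-verified Lean document; each statement's English description precedes it below -/
import Mathlib

section
/- If f: ℝ → ℝ is convex, then the map X ↦ Tr(f(X)) on N×N real symmetric matrices is convex. -/
open Matrix

/-- Peierls inequality: for a real symmetric matrix `A` and an orthogonal matrix `W`,
`∑ i f((Wᵀ A W)ᵢᵢ) ≤ ∑ i f(λᵢ(A))`. -/
lemma peierls (f : ℝ → ℝ) (hf : ConvexOn ℝ Set.univ f)
    (N : ℕ) (A : Matrix (Fin N) (Fin N) ℝ) (hA : A.IsHermitian)
    (W : Matrix (Fin N) (Fin N) ℝ) (hW : W ∈ Matrix.unitaryGroup (Fin N) ℝ) :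
    ∑ i, f ((star W * A * W) i i) ≤ ∑ i, f (hA.eigenvalues i) := by
  set U : Matrix (Fin N) (Fin N) ℝ := (hA.eigenvectorUnitary : Matrix (Fin N) (Fin N) ℝ)
  set M : Matrix (Fin N) (Fin N) ℝ := star W * U with hM
  have hMunit : M ∈ Matrix.unitaryGroup (Fin N) ℝ :=
    mul_mem (Unitary.star_mem hW) hA.eigenvectorUnitary.2
  have hrow : ∀ i, ∑ j, M i j ^ 2 = 1 := by
    intro i
    have := congrFun (congrFun (Matrix.mem_unitaryGroup_iff.mp hMunit) i) i
    simpa [Matrix.mul_apply, Matrix.one_apply, pow_two] using this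
  have hcol : ∀ j, ∑ i, M i j ^ 2 = 1 := by
    intro j
    have := congrFun (congrFun (Matrix.mem_unitaryGroup_iff'.mp hMunit) j) j
    simpa [Matrix.mul_apply, Matrix.one_apply, pow_two, mul_comm] using this
  have hspec : star W * A * W = M * Matrix.diagonal hA.eigenvalues * star M := by
    have h1 := hA.spectral_theorem
    simp only [Unitary.conjStarAlgAut_apply, Unitary.coe_star] at h1
    have h2 : (Matrix.diagonal ((RCLike.ofReal : ℝ → ℝ) ∘ hA.eigenvalues)) =
        Matrix.diagonal hA.eigenvalues := by
      congr 1
    rw [hM, StarMul.star_mul, star_star]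
    calc star W * A * W
        = star W * (U * Matrix.diagonal hA.eigenvalues * star U) * W := by
          rw [← h2, ← h1]
      _ = star W * U * Matrix.diagonal hA.eigenvalues * (star U * W) := by
          noncomm_ring
  have hdiag : ∀ i, (star W * A * W) i i = ∑ j, M i j ^ 2 * hA.eigenvalues j := by
    intro i
    rw [hspec]
    simp [Matrix.mul_apply, Matrix.diagonal, Matrix.mul_apply, Finset.sum_mul,
      pow_two]
    apply Finset.sum_congr rfl
    intro j _
    ring
  calc ∑ i, f ((star W * A * W) i i)
      ≤ ∑ i, ∑ j, M i j ^ 2 * f (hA.eigenvalues j) := by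
        apply Finset.sum_le_sum
        intro i _
        rw [hdiag i]
        have := hf.map_sum_le (t := Finset.univ) (w := fun j => M i j ^ 2)
          (p := fun j => hA.eigenvalues j)
          (fun j _ => sq_nonneg _) (hrow i) (fun j _ => Set.mem_univ _)
        simpa [smul_eq_mul] using this
    _ = ∑ j, (∑ i, M i j ^ 2) * f (hA.eigenvalues j) := by
        rw [Finset.sum_comm]
        simp [Finset.sum_mul]
    _ = ∑ j, f (hA.eigenvalues j) := by
        simp [hcol]

/-- Klein's lemma: if `f : ℝ → ℝ` is convex, then `X ↦ Tr(f(X)) = ∑ᵢ f(λᵢ(X))` is convex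
on `N×N` real symmetric matrices. -/
theorem stmt11 (f : ℝ → ℝ) (hf : ConvexOn ℝ Set.univ f)
    (N : ℕ) (X Y : Matrix (Fin N) (Fin N) ℝ)
    (hX : X.IsHermitian) (hY : Y.IsHermitian)
    (t : ℝ) (ht0 : 0 ≤ t) (ht1 : t ≤ 1)
    (hZ : (t • X + (1 - t) • Y).IsHermitian) :
    ∑ i, f (hZ.eigenvalues i) ≤
      t * ∑ i, f (hX.eigenvalues i) + (1 - t) * ∑ i, f (hY.eigenvalues i) := by
  set U : Matrix (Fin N) (Fin N) ℝ := (hZ.eigenvectorUnitary : Matrix (Fin N) (Fin N) ℝ)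
  have hU : U ∈ Matrix.unitaryGroup (Fin N) ℝ := (hZ.eigenvectorUnitary).2
  have heig : ∀ i, hZ.eigenvalues i = (star U * (t • X + (1 - t) • Y) * U) i i := by
    intro i
    have := hZ.conjStarAlgAut_star_eigenvectorUnitary
    simp only [Unitary.conjStarAlgAut_apply, Unitary.coe_star, star_star] at this
    have h := congrFun (congrFun this i) i
    simp [Matrix.diagonal] at h
    rw [h]
  have hsplit : ∀ i, (star U * (t • X + (1 - t) • Y) * U) i i =
      t * (star U * X * U) i i + (1 - t) * (star U * Y * U) i i := by
    intro i
    have : star U * (t • X + (1 - t) • Y) * U =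
        t • (star U * X * U) + (1 - t) • (star U * Y * U) := by
      rw [Matrix.mul_add, Matrix.add_mul]
      congr 1 <;> simp [Matrix.mul_smul, Matrix.smul_mul]
    rw [this]
    simp
  have step1 : ∑ i, f (hZ.eigenvalues i) ≤
      t * ∑ i, f ((star U * X * U) i i) + (1 - t) * ∑ i, f ((star U * Y * U) i i) := by
    rw [Finset.mul_sum, Finset.mul_sum, ← Finset.sum_add_distrib]
    apply Finset.sum_le_sum
    intro i _
    rw [heig i, hsplit i]
    have key : f (t • ((star U * X * U) i i) + (1 - t) • ((star U * Y * U) i i)) ≤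
        t • f ((star U * X * U) i i) + (1 - t) • f ((star U * Y * U) i i) :=
      hf.2 (Set.mem_univ _) (Set.mem_univ _) ht0 (by linarith) (by ring)
    simpa [smul_eq_mul] using key
  have hpX := peierls f hf N X hX U hU
  have hpY := peierls f hf N Y hY U hU
  have h1t : 0 ≤ 1 - t := by linarith
  calc ∑ i, f (hZ.eigenvalues i)
      ≤ t * ∑ i, f ((star U * X * U) i i) + (1 - t) * ∑ i, f ((star U * Y * U) i i) := step1
    _ ≤ t * ∑ i, f (hX.eigenvalues i) + (1 - t) * ∑ i, f (hY.eigenvalues i) := by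
        gcongr
end

section
/- Let ν be a measure-valued path with S_μ(ν) ≤ M (with S_μ the dynamical rate function for Dyson Brownian motion). Then for any f ∈ C²ᵇ(ℝ) and 0 ≤ s ≤ t ≤ 1, |ν_t(f) - ν_s(f)| ≤ ‖∂ₓ²f‖_∞ |t-s| + 2‖∂ₓf‖_∞ √M √|t-s|. In particular the level sets of S_μ consist of paths that are uniformly (1/2)-Hölder in this weak sense. -/
open MeasureTheory

/-- The hydrodynamic functional `S^{s,t}(ν,f)`. -/
noncomputable def Sst (ν : ℝ → Measure ℝ) (f : ℝ → ℝ → ℝ) (s t : ℝ) : ℝ :=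
  (∫ x, f x t ∂(ν t)) - (∫ x, f x s ∂(ν s)) -
    (∫ u in s..t, ∫ x, deriv (fun v => f x v) u ∂(ν u)) -
    (1 / 2) * ∫ u in s..t, ∫ x, ∫ y,
      (deriv (fun z => f z u) x - deriv (fun z => f z u) y) / (x - y) ∂(ν u) ∂(ν u)

/-- The quadratic form `⟨f,f⟩_ν^{s,t} = ∫ₛᵗ ∫ (∂ₓf)² dν_u du`. -/
noncomputable def Qst (ν : ℝ → Measure ℝ) (f : ℝ → ℝ → ℝ) (s t : ℝ) : ℝ :=
  ∫ u in s..t, ∫ x, (deriv (fun z => f z u) x) ^ 2 ∂(ν u)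

/-- The class `C_b^{2,1}(ℝ × [0,1])` of test functions. -/
def Cb21 : Set (ℝ → ℝ → ℝ) :=
  {f | ContDiff ℝ 2 (fun p : ℝ × ℝ => f p.1 p.2) ∧
    ∃ C, ∀ x u, |f x u| ≤ C ∧ |deriv (fun z => f z u) x| ≤ C ∧
      |deriv (deriv (fun z => f z u)) x| ≤ C ∧ |deriv (fun v => f x v) u| ≤ C}

set_option maxHeartbeats 1000000 in
/-- Weak Hölder-1/2 continuity on the level sets of the dynamical rate function: if
`S_μ(ν) ≤ M` then for every `f ∈ C²ᵇ(ℝ)` and `0 ≤ s ≤ t ≤ 1`,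
`|ν_t(f) - ν_s(f)| ≤ ‖f''‖_∞ |t-s| + 2‖f'‖_∞ √M √|t-s|`. -/
theorem stmt15 (μ : Measure ℝ) (ν : ℝ → Measure ℝ)
    (hprob : ∀ u, IsProbabilityMeasure (ν u)) (hν0 : ν 0 = μ)
    (hcont : ∀ g : BoundedContinuousFunction ℝ ℝ,
      Continuous fun u => ∫ x, g x ∂(ν u))
    (M : ℝ) (hM : 0 ≤ M)
    (hS : (⨆ f ∈ Cb21, ⨆ s : ℝ, ⨆ t : ℝ, ⨆ _ : 0 ≤ s ∧ s ≤ t ∧ t ≤ 1,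
        ENNReal.ofReal (Sst ν f s t - (1 / 2) * Qst ν f s t)) ≤ ENNReal.ofReal M)
    (f : ℝ → ℝ) (hf : ContDiff ℝ 2 f) (C0 C1 C2 : ℝ)
    (hb0 : ∀ x, |f x| ≤ C0) (hb1 : ∀ x, |deriv f x| ≤ C1)
    (hb2 : ∀ x, |deriv (deriv f) x| ≤ C2)
    (s t : ℝ) (hs : 0 ≤ s) (hst : s ≤ t) (ht : t ≤ 1) :
    |(∫ x, f x ∂(ν t)) - ∫ x, f x ∂(ν s)| ≤
      C2 * |t - s| + 2 * C1 * Real.sqrt M * Real.sqrt |t - s| := by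
  have hC0 : 0 ≤ C0 := le_trans (abs_nonneg _) (hb0 0)
  have hC1 : 0 ≤ C1 := le_trans (abs_nonneg _) (hb1 0)
  have hC2 : 0 ≤ C2 := le_trans (abs_nonneg _) (hb2 0)
  have hΔ : 0 ≤ t - s := sub_nonneg.mpr hst
  have habs : |t - s| = t - s := abs_of_nonneg hΔ
  have hdf : Differentiable ℝ f := hf.differentiable two_ne_zero
  have hdf' : Differentiable ℝ (deriv f) := by
    have h2 : ContDiff ℝ ((1 : ℕ) + 1) f := by exact_mod_cast hf
    exact (contDiff_succ_iff_deriv.mp h2).2.2.differentiable (by simp)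
  -- Lipschitz bound for `deriv f`
  have hlip : ∀ x y : ℝ, |deriv f x - deriv f y| ≤ C2 * |x - y| := by
    intro x y
    have := Convex.norm_image_sub_le_of_norm_deriv_le
      (f := deriv f) (fun z _ => hdf' z)
      (fun z _ => by simpa using hb2 z) convex_univ (Set.mem_univ y) (Set.mem_univ x)
    simpa [Real.norm_eq_abs] using this
  have hquot : ∀ x y : ℝ, |(deriv f x - deriv f y) / (x - y)| ≤ C2 := by
    intro x y
    rcases eq_or_ne x y with h | h
    · simp [h, hC2]
    · have hxy : x - y ≠ 0 := sub_ne_zero.mpr h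
      rw [abs_div, div_le_iff₀ (abs_pos.mpr hxy)]
      exact hlip x y
  set D : ℝ := (∫ x, f x ∂(ν t)) - ∫ x, f x ∂(ν s) with hD
  -- key inequality for every λ
  have key : ∀ l : ℝ,
      l * D ≤ M + |l| * C2 * (t - s) / 2 + l ^ 2 * C1 ^ 2 * (t - s) / 2 := by
    intro l
    set g : ℝ → ℝ → ℝ := fun x _ => l * f x with hg
    have e1 : ∀ u : ℝ, deriv (fun z => g z u) = fun x => l * deriv f x := by
      intro u; funext z
      exact deriv_const_mul l (hdf z)
    have e2 : ∀ u : ℝ, deriv (deriv (fun z => g z u)) = fun x => l * deriv (deriv f) x := by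
      intro u; rw [e1 u]; funext z
      exact deriv_const_mul l (hdf' z)
    have hgmem : g ∈ Cb21 := by
      constructor
      · exact contDiff_const.mul (hf.comp contDiff_fst)
      · refine ⟨|l| * C0 + |l| * C1 + |l| * C2, fun x u => ?_⟩
        have n0 : 0 ≤ |l| * C0 := by positivity
        have n1 : 0 ≤ |l| * C1 := by positivity
        have n2 : 0 ≤ |l| * C2 := by positivity
        refine ⟨?_, ?_, ?_, ?_⟩
        · have : |g x u| = |l| * |f x| := by rw [hg]; simp [abs_mul]
          rw [this]
          nlinarith [mul_le_mul_of_nonneg_left (hb0 x) (abs_nonneg l)]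
        · rw [e1 u]
          have : |l * deriv f x| = |l| * |deriv f x| := abs_mul _ _
          rw [this]
          nlinarith [mul_le_mul_of_nonneg_left (hb1 x) (abs_nonneg l)]
        · rw [e2 u]
          have : |l * deriv (deriv f) x| = |l| * |deriv (deriv f) x| := abs_mul _ _
          rw [this]
          nlinarith [mul_le_mul_of_nonneg_left (hb2 x) (abs_nonneg l)]
        · have : (fun v => g x v) = fun _ => l * f x := rfl
          rw [this, deriv_const]
          simp only [abs_zero]
          linarith
    -- extract the bound from the sup
    have hle : ENNReal.ofReal (Sst ν g s t - (1 / 2) * Qst ν g s t) ≤ ENNReal.ofReal M := by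
      refine le_trans ?_ hS
      refine le_iSup_of_le g ?_
      refine le_iSup_of_le hgmem ?_
      refine le_iSup_of_le s ?_
      refine le_iSup_of_le t ?_
      exact le_iSup_of_le ⟨hs, hst, ht⟩ le_rfl
    have hle' : Sst ν g s t - (1 / 2) * Qst ν g s t ≤ M :=
      (ENNReal.ofReal_le_ofReal_iff hM).mp hle
    -- compute/bound the pieces of Sst and Qst
    have hP : ∀ u, IsProbabilityMeasure (ν u) := hprob
    -- transport term bound
    set T : ℝ := ∫ u in s..t, ∫ x, ∫ y,
        (deriv (fun z => g z u) x - deriv (fun z => g z u) y) / (x - y) ∂(ν u) ∂(ν u) with hT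
    have hTbound : |T| ≤ |l| * C2 * (t - s) := by
      have : ‖T‖ ≤ (|l| * C2) * |t - s| := by
        apply intervalIntegral.norm_integral_le_of_norm_le_const
        intro u _
        haveI := hP u
        have inner : ∀ x : ℝ, ‖∫ y,
            (deriv (fun z => g z u) x - deriv (fun z => g z u) y) / (x - y) ∂(ν u)‖
            ≤ |l| * C2 := by
          intro x
          have := norm_integral_le_of_norm_le_const (μ := ν u)
            (f := fun y => (deriv (fun z => g z u) x - deriv (fun z => g z u) y) / (x - y))
            (C := |l| * C2) ?_
          · simpa using this
          · filter_upwards with y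
            rw [e1 u]
            have hre : (l * deriv f x - l * deriv f y) / (x - y)
                = l * ((deriv f x - deriv f y) / (x - y)) := by ring
            rw [Real.norm_eq_abs, hre, abs_mul]
            exact mul_le_mul_of_nonneg_left (hquot x y) (abs_nonneg l)
        have := norm_integral_le_of_norm_le_const (μ := ν u)
          (f := fun x => ∫ y,
            (deriv (fun z => g z u) x - deriv (fun z => g z u) y) / (x - y) ∂(ν u))
          (C := |l| * C2) (Filter.Eventually.of_forall inner)
        simpa using this
      calc |T| = ‖T‖ := (Real.norm_eq_abs T).symm
        _ ≤ (|l| * C2) * |t - s| := this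
        _ = |l| * C2 * (t - s) := by rw [habs]
    -- quadratic term bound
    have hQbound : |Qst ν g s t| ≤ l ^ 2 * C1 ^ 2 * (t - s) := by
      have : ‖Qst ν g s t‖ ≤ (l ^ 2 * C1 ^ 2) * |t - s| := by
        apply intervalIntegral.norm_integral_le_of_norm_le_const
        intro u _
        haveI := hP u
        have inner : ∀ x : ℝ, ‖(deriv (fun z => g z u) x) ^ 2‖ ≤ l ^ 2 * C1 ^ 2 := by
          intro x
          rw [e1 u, Real.norm_eq_abs, abs_of_nonneg (by positivity)]
          have h1 : (deriv f x) ^ 2 ≤ C1 ^ 2 := by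
            rw [← sq_abs]
            exact pow_le_pow_left₀ (abs_nonneg _) (hb1 x) 2
          have : (l * deriv f x) ^ 2 = l ^ 2 * (deriv f x) ^ 2 := by ring
          rw [this]
          exact mul_le_mul_of_nonneg_left h1 (sq_nonneg l)
        have := norm_integral_le_of_norm_le_const (μ := ν u)
          (f := fun x => (deriv (fun z => g z u) x) ^ 2)
          (C := l ^ 2 * C1 ^ 2) (Filter.Eventually.of_forall inner)
        simpa using this
      calc |Qst ν g s t| = ‖Qst ν g s t‖ := (Real.norm_eq_abs _).symm
        _ ≤ (l ^ 2 * C1 ^ 2) * |t - s| := this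
        _ = l ^ 2 * C1 ^ 2 * (t - s) := by rw [habs]
    -- compute Sst ν g s t
    have hSst : Sst ν g s t = l * D - (1 / 2) * T := by
      have h1 : (∫ x, g x t ∂(ν t)) = l * ∫ x, f x ∂(ν t) := by
        rw [hg]; exact integral_const_mul l f
      have h2 : (∫ x, g x s ∂(ν s)) = l * ∫ x, f x ∂(ν s) := by
        rw [hg]; exact integral_const_mul l f
      have h3 : (∫ u in s..t, ∫ x, deriv (fun v => g x v) u ∂(ν u)) = 0 := by
        have : ∀ x u : ℝ, deriv (fun v => g x v) u = 0 := by
          intro x u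
          have : (fun v => g x v) = fun _ => l * f x := rfl
          rw [this, deriv_const]
        simp only [this, integral_zero, intervalIntegral.integral_zero]
      unfold Sst
      rw [h1, h2, h3, ← hT, hD]
      ring
    rw [hSst] at hle'
    have h4 : T ≤ |T| := le_abs_self T
    have h5 : Qst ν g s t ≤ |Qst ν g s t| := le_abs_self _
    linarith [hTbound, hQbound]
  -- now optimize over λ
  have key2 : ∀ x : ℝ, 0 ≤ x →
      x * |D| ≤ M + x * C2 * (t - s) / 2 + x ^ 2 * C1 ^ 2 * (t - s) / 2 := by
    intro x hx
    rcases le_or_gt 0 D with h | h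
    · have := key x
      rw [abs_of_nonneg h]
      rwa [abs_of_nonneg hx] at this
    · have hkey := key (-x)
      rw [abs_neg, abs_of_nonneg hx] at hkey
      rw [abs_of_neg h]
      nlinarith [hkey]
  clear_value D
  rw [habs]
  have hrnn : 0 ≤ 2 * C1 * Real.sqrt M * Real.sqrt (t - s) := by positivity
  by_cases hDle : |D| ≤ C2 * (t - s) / 2
  · nlinarith
  push_neg at hDle
  set c : ℝ := |D| - C2 * (t - s) / 2 with hc
  have hcpos : 0 < c := by rw [hc]; linarith
  have hDeq : |D| = c + C2 * (t - s) / 2 := by rw [hc]; ring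
  clear_value c
  have hbnn : 0 ≤ C1 ^ 2 * (t - s) := by positivity
  rcases eq_or_lt_of_le hbnn with hb0 | hbpos
  · -- degenerate case `C1 ^ 2 * (t - s) = 0`: contradiction
    exfalso
    have hx : (0 : ℝ) ≤ (M + 1) / c := by positivity
    have hkey := key2 ((M + 1) / c) hx
    have hxc : (M + 1) / c * c = M + 1 := div_mul_cancel₀ _ (ne_of_gt hcpos)
    have h0 : ((M + 1) / c) ^ 2 * C1 ^ 2 * (t - s) = 0 := by
      rw [show ((M + 1) / c) ^ 2 * C1 ^ 2 * (t - s)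
          = ((M + 1) / c) ^ 2 * (C1 ^ 2 * (t - s)) by ring, ← hb0, mul_zero]
    have hXD : (M + 1) / c * |D| = (M + 1) + (M + 1) / c * C2 * (t - s) / 2 := by
      rw [hDeq]; rw [show (M + 1) / c * (c + C2 * (t - s) / 2)
          = (M + 1) / c * c + (M + 1) / c * C2 * (t - s) / 2 by ring, hxc]
    linarith [hkey, hXD, h0]
  · -- main case: plug the optimal `x = c / b` with `b = C1 ^ 2 * (t - s)`
    have hbne : C1 ^ 2 * (t - s) ≠ 0 := ne_of_gt hbpos
    have hx : (0 : ℝ) ≤ c / (C1 ^ 2 * (t - s)) := by positivity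
    have hkey := key2 (c / (C1 ^ 2 * (t - s))) hx
    have hC1sq : 0 < C1 ^ 2 := by nlinarith [sq_nonneg C1, hΔ]
    have hΔpos : 0 < t - s := by nlinarith [sq_nonneg C1, hΔ]
    have hC1ne : C1 ≠ 0 := by
      intro h; rw [h] at hC1sq; simp at hC1sq
    have hΔne : t - s ≠ 0 := ne_of_gt hΔpos
    have hc2 : c ^ 2 ≤ 2 * M * (C1 ^ 2 * (t - s)) := by
      have h3 : c / (C1 ^ 2 * (t - s)) * |D|
          = c ^ 2 / (C1 ^ 2 * (t - s)) + c / (C1 ^ 2 * (t - s)) * C2 * (t - s) / 2 := by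
        rw [hDeq]; ring
      have e1 : c / (C1 ^ 2 * (t - s)) * (C1 ^ 2 * (t - s)) = c :=
        div_mul_cancel₀ _ hbne
      have h4 : (c / (C1 ^ 2 * (t - s))) ^ 2 * C1 ^ 2 * (t - s) / 2
          = c ^ 2 / (C1 ^ 2 * (t - s)) / 2 := by
        calc (c / (C1 ^ 2 * (t - s))) ^ 2 * C1 ^ 2 * (t - s) / 2
            = c / (C1 ^ 2 * (t - s)) *
              (c / (C1 ^ 2 * (t - s)) * (C1 ^ 2 * (t - s))) / 2 := by ring
          _ = c / (C1 ^ 2 * (t - s)) * c / 2 := by rw [e1]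
          _ = c ^ 2 / (C1 ^ 2 * (t - s)) / 2 := by ring
      have h5 : c ^ 2 / (C1 ^ 2 * (t - s)) ≤ 2 * M := by linarith [hkey, h3, h4]
      calc c ^ 2 = c ^ 2 / (C1 ^ 2 * (t - s)) * (C1 ^ 2 * (t - s)) :=
            (div_mul_cancel₀ _ hbne).symm
        _ ≤ 2 * M * (C1 ^ 2 * (t - s)) := mul_le_mul_of_nonneg_right h5 hbnn
    -- conclude via square roots
    have hr2 : c ^ 2 ≤ (2 * C1 * Real.sqrt M * Real.sqrt (t - s)) ^ 2 := by
      have : (2 * C1 * Real.sqrt M * Real.sqrt (t - s)) ^ 2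
          = 4 * C1 ^ 2 * M * (t - s) := by
        rw [show (2 * C1 * Real.sqrt M * Real.sqrt (t - s)) ^ 2
            = 4 * C1 ^ 2 * (Real.sqrt M ^ 2) * (Real.sqrt (t - s) ^ 2) by ring,
          Real.sq_sqrt hM, Real.sq_sqrt hΔ]
      rw [this]
      have hpos : 0 ≤ M * (C1 ^ 2 * (t - s)) := by positivity
      linarith [hc2, hpos]
    have hcle : c ≤ 2 * C1 * Real.sqrt M * Real.sqrt (t - s) := by
      nlinarith [hr2, hrnn, hcpos]
    linarith [hcle, hDeq, mul_nonneg hC2 hΔ]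
end
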